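/- arXiv:2310.19364 — 2 statements merged into one kernel-verified Lean document; each statement's English description precedes it below -/
import Mathlib

section
/- Let T_{λ₁⋯λₙ} be as defined recursively (T = [], T_{λ₁⋯λ_{n+1}} = T_{λ₁⋯λₙ} ++ [λ_{n+1}] ++ T_{λ₁⋯λₙ} ++ [−λ_{n+1}] ++ T_{λ₁⋯λₙ}), indexed from 1. Then for n ≥ 1, the subsequence of T_{λ₁⋯λₙ} consisting of the entries at positions divisible by 3 equals T_{λ₂⋯λₙ}: for 1 ≤ i ≤ 3^{n−1} − 1, the (3i)-th entry of T_{λ₁⋯λₙ} equals the i-th entry of T_{λ₂⋯λₙ}. -/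
/-- Auxiliary recursion: the head of the list is the last parameter λₙ. -/
def foldTAux : List ℤ → List ℤ
  | [] => []
  | lam :: L => foldTAux L ++ [lam] ++ foldTAux L ++ [-lam] ++ foldTAux L

/-- `foldT [λ₁, …, λₙ]` is the terdragon-type folding sequence `T_{λ₁⋯λₙ}`,
satisfying `foldT [] = []` and
`foldT (Λ ++ [μ]) = foldT Λ ++ [μ] ++ foldT Λ ++ [-μ] ++ foldT Λ`. -/
def foldT (Λ : List ℤ) : List ℤ := foldTAux Λ.reverse

lemma foldTAux_length (L : List ℤ) : (foldTAux L).length = 3 ^ L.length - 1 := by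
  induction L with
  | nil => simp [foldTAux]
  | cons lam L ih =>
    have h : 1 ≤ 3 ^ L.length := Nat.one_le_pow _ _ (by norm_num)
    simp [foldTAux, ih, pow_succ]
    omega

lemma foldT_length (Λ : List ℤ) : (foldT Λ).length = 3 ^ Λ.length - 1 := by
  rw [foldT, foldTAux_length, List.length_reverse]

lemma foldT_snoc (Λ : List ℤ) (μ : ℤ) :
    foldT (Λ ++ [μ]) = foldT Λ ++ [μ] ++ foldT Λ ++ [-μ] ++ foldT Λ := by
  simp [foldT, foldTAux]

/-- getD of a five-block concatenation, in each of the five regions. -/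
lemma getD5_1 (A : List ℤ) (μ : ℤ) (n : ℕ) (h : n < A.length) :
    (A ++ [μ] ++ A ++ [-μ] ++ A).getD n 0 = A.getD n 0 := by
  rw [List.getD_append (A ++ [μ] ++ A ++ [-μ]) A 0 n (by simp; try omega),
      List.getD_append (A ++ [μ] ++ A) [-μ] 0 n (by simp; try omega),
      List.getD_append (A ++ [μ]) A 0 n (by simp; try omega),
      List.getD_append A [μ] 0 n h]

lemma getD5_2 (A : List ℤ) (μ : ℤ) :
    (A ++ [μ] ++ A ++ [-μ] ++ A).getD A.length 0 = μ := by
  rw [List.getD_append (A ++ [μ] ++ A ++ [-μ]) A 0 _ (by simp; try omega),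
      List.getD_append (A ++ [μ] ++ A) [-μ] 0 _ (by simp; try omega),
      List.getD_append (A ++ [μ]) A 0 _ (by simp),
      List.getD_append_right A [μ] 0 _ (le_refl _)]
  simp

lemma getD5_3 (A : List ℤ) (μ : ℤ) (n : ℕ) (h : n < A.length) :
    (A ++ [μ] ++ A ++ [-μ] ++ A).getD (A.length + 1 + n) 0 = A.getD n 0 := by
  rw [List.getD_append (A ++ [μ] ++ A ++ [-μ]) A 0 _ (by simp; try omega),
      List.getD_append (A ++ [μ] ++ A) [-μ] 0 _ (by simp; try omega),
      List.getD_append_right (A ++ [μ]) A 0 _ (by simp; try omega)]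
  congr 1
  simp
  try omega

lemma getD5_4 (A : List ℤ) (μ : ℤ) :
    (A ++ [μ] ++ A ++ [-μ] ++ A).getD (2 * A.length + 1) 0 = -μ := by
  rw [List.getD_append (A ++ [μ] ++ A ++ [-μ]) A 0 _ (by simp; try omega),
      List.getD_append_right (A ++ [μ] ++ A) [-μ] 0 _ (by simp; try omega)]
  have : 2 * A.length + 1 - (A ++ [μ] ++ A).length = 0 := by simp; try omega
  rw [this]
  simp

lemma getD5_5 (A : List ℤ) (μ : ℤ) (n : ℕ) :
    (A ++ [μ] ++ A ++ [-μ] ++ A).getD (2 * A.length + 2 + n) 0 = A.getD n 0 := by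
  rw [List.getD_append_right (A ++ [μ] ++ A ++ [-μ]) A 0 _ (by simp; try omega)]
  congr 1
  simp
  try omega

lemma foldT_key : ∀ (L : List ℤ) (lam : ℤ) (i : ℕ), 1 ≤ i → i ≤ 3 ^ L.length - 1 →
    (foldT (lam :: L)).getD (3 * i - 1) 0 = (foldT L).getD (i - 1) 0 := by
  intro L
  induction L using List.reverseRecOn with
  | nil => intro lam i h1 h2; simp at h2; omega
  | append_singleton L' μ ih =>
    intro lam i h1 h2
    have hA : foldT (lam :: (L' ++ [μ]))
        = foldT (lam :: L') ++ [μ] ++ foldT (lam :: L') ++ [-μ] ++ foldT (lam :: L') := by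
      rw [show lam :: (L' ++ [μ]) = (lam :: L') ++ [μ] from rfl, foldT_snoc]
    have hB := foldT_snoc L' μ
    set A := foldT (lam :: L') with hAdef
    set B := foldT L' with hBdef
    set m := 3 ^ L'.length with hmdef
    have hm : 1 ≤ m := Nat.one_le_pow _ _ (by norm_num)
    have hlA : A.length = 3 * m - 1 := by
      rw [hAdef, foldT_length]; simp [hmdef, pow_succ]; ring_nf
    have hlB : B.length = m - 1 := by rw [hBdef, foldT_length]
    have h2' : i ≤ 3 * m - 1 := by
      have : (3:ℕ) ^ (L' ++ [μ]).length = 3 * m := by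
        simp [hmdef, pow_succ]; ring
      omega
    rw [hA, hB]
    rcases lt_trichotomy i m with hlt | heq | hgt
    · rw [getD5_1 A μ _ (by omega), getD5_1 B μ _ (by omega)]
      exact ih lam i h1 (by omega)
    · subst heq
      have e1 : 3 * m - 1 = A.length := by omega
      have e2 : m - 1 = B.length := by omega
      rw [e1, e2, getD5_2 A μ, getD5_2 B μ]
    · rcases lt_trichotomy i (2 * m) with hlt2 | heq2 | hgt2
      · have e1 : 3 * i - 1 = A.length + 1 + (3 * (i - m) - 1) := by omega
        have e2 : i - 1 = B.length + 1 + ((i - m) - 1) := by omega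
        rw [e1, e2, getD5_3 A μ _ (by omega), getD5_3 B μ _ (by omega)]
        exact ih lam (i - m) (by omega) (by omega)
      · subst heq2
        have e1 : 3 * (2 * m) - 1 = 2 * A.length + 1 := by omega
        have e2 : 2 * m - 1 = 2 * B.length + 1 := by omega
        rw [e1, e2, getD5_4 A μ, getD5_4 B μ]
      · have e1 : 3 * i - 1 = 2 * A.length + 2 + (3 * (i - 2 * m) - 1) := by omega
        have e2 : i - 1 = 2 * B.length + 2 + ((i - 2 * m) - 1) := by omega
        rw [e1, e2, getD5_5 A μ _, getD5_5 B μ _]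
        exact ih lam (i - 2 * m) (by omega) (by omega)

theorem foldT_derivation (lam : ℤ) (L : List ℤ)
    (hΛ : ∀ x ∈ lam :: L, x = 1 ∨ x = -1)
    (i : ℕ) (hi1 : 1 ≤ i) (hi2 : i ≤ 3 ^ L.length - 1) :
    (foldT (lam :: L)).getD (3 * i - 1) 0 = (foldT L).getD (i - 1) 0 := by
  exact foldT_key L lam i hi1 hi2
end

section
/- With ω = e^{2πi/3} and the endpoint map E as above, for all n ≥ 0 and λ₁, …, λₙ ∈ {−1,+1}, the modulus of E(T_{λ₁⋯λₙ}) equals (√3)ⁿ. -/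
/-- The primitive cube root of unity `ω = e^{2πi/3}`. -/
noncomputable def ω : ℂ := Complex.exp (2 * Real.pi * Complex.I / 3)

/-- The endpoint of the unit-step path with turning sequence `a`. -/
noncomputable def endpointT (a : List ℤ) : ℂ :=
  ((List.range (a.length + 1)).map (fun j => ω ^ ((a.take j).sum))).sum

lemma isPrimitiveRoot_omega : IsPrimitiveRoot ω 3 := by
  simpa [ω] using Complex.isPrimitiveRoot_exp 3 (by norm_num)

lemma omega_ne_zero : ω ≠ 0 := isPrimitiveRoot_omega.ne_zero (by norm_num)

lemma norm_omega : ‖ω‖ = 1 := isPrimitiveRoot_omega.norm'_eq_one (by norm_num)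

lemma omega_add_omega_inv : ω + ω⁻¹ = -1 := by
  have hcube : ω ^ 3 = 1 := isPrimitiveRoot_omega.pow_eq_one
  have hgeom : ∑ i ∈ Finset.range 3, ω ^ i = 0 :=
    isPrimitiveRoot_omega.geom_sum_eq_zero (by norm_num)
  have hinv : ω⁻¹ = ω ^ 2 := inv_eq_of_mul_eq_one_right (by rw [← pow_succ', hcube])
  simp only [Finset.sum_range_succ, Finset.sum_range_zero, pow_zero, pow_one] at hgeom
  rw [hinv]
  linear_combination hgeom

lemma norm_two_add_eq_sqrt_three {z : ℂ} (hz : ‖z‖ = 1) (hsum : z + z⁻¹ = -1) :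
    ‖2 + z‖ = √3 := by
  have hz0 : z ≠ 0 := norm_ne_zero_iff.mp (by simp [hz])
  have hsq : ‖2 + z‖ ^ 2 = 3 := by
    have h : (2 + z) * starRingEnd ℂ (2 + z) = 3 := by
      rw [map_add, map_ofNat, ← Complex.inv_eq_conj hz]
      linear_combination 2 * hsum + mul_inv_cancel₀ hz0
    exact_mod_cast (Complex.mul_conj' (2 + z)).symm.trans h
  rw [← hsq, Real.sqrt_sq (norm_nonneg _)]

lemma norm_two_add_omega_zpow {x : ℤ} (hx : x = 1 ∨ x = -1) : ‖2 + ω ^ x‖ = √3 := by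
  apply norm_two_add_eq_sqrt_three (by rw [norm_zpow, norm_omega, one_zpow])
  rcases hx with rfl | rfl
  · simpa using omega_add_omega_inv
  · simpa [add_comm] using omega_add_omega_inv

lemma endpointT_nil : endpointT [] = 1 := by
  simp [endpointT]

lemma endpointT_cons (x : ℤ) (a : List ℤ) :
    endpointT (x :: a) = 1 + ω ^ x * endpointT a := by
  unfold endpointT
  rw [List.length_cons, List.range_succ_eq_map]
  simp [List.map_map, Function.comp_def, List.take_succ_cons, zpow_add₀ omega_ne_zero,
    List.sum_map_mul_left]

lemma endpointT_append (a b : List ℤ) :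
    endpointT (a ++ b) = endpointT a + ω ^ a.sum * (endpointT b - 1) := by
  induction a with
  | nil => simp [endpointT_nil]
  | cons x a ih =>
    simp only [List.cons_append, endpointT_cons, ih, List.sum_cons, zpow_add₀ omega_ne_zero]
    ring

lemma sum_foldTAux (L : List ℤ) : (foldTAux L).sum = 0 := by
  induction L with
  | nil => rfl
  | cons x L ih => simp [foldTAux, ih]

lemma endpointT_foldTAux_cons (x : ℤ) (L : List ℤ) :
    endpointT (foldTAux (x :: L)) = (2 + ω ^ x) * endpointT (foldTAux L) := by
  have hx : ω ^ x * ω ^ (-x) = 1 := by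
    rw [← zpow_add₀ omega_ne_zero, add_neg_cancel, zpow_zero]
  simp only [foldTAux, endpointT_append, endpointT_cons, endpointT_nil, sum_foldTAux,
    List.sum_append, List.sum_cons, List.sum_nil, add_zero, zero_add, add_neg_cancel, zpow_zero]
  linear_combination hx

lemma endpointT_foldTAux (L : List ℤ) :
    endpointT (foldTAux L) = (L.map fun x => 2 + ω ^ x).prod := by
  induction L with
  | nil => simp [foldTAux, endpointT_nil]
  | cons x L ih => rw [endpointT_foldTAux_cons, ih, List.map_cons, List.prod_cons]

lemma endpointT_foldT (Λ : List ℤ) :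
    endpointT (foldT Λ) = (Λ.map fun x => 2 + ω ^ x).prod := by
  rw [foldT, endpointT_foldTAux, List.map_reverse, List.prod_reverse]

theorem abs_endpoint_foldT (Λ : List ℤ) (hΛ : ∀ x ∈ Λ, x = 1 ∨ x = -1) :
    ‖endpointT (foldT Λ)‖ = (Real.sqrt 3) ^ Λ.length := by
  rw [endpointT_foldT, List.norm_prod, List.map_map, Function.comp_def,
    List.map_congr_left fun x hx => norm_two_add_omega_zpow (hΛ x hx),
    List.map_const', List.prod_replicate]
end
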